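/- arXiv:1612.01499 — 2 statements merged into one kernel-verified Lean document; each statement's English description precedes it below -/
import Mathlib

section
/- Let β : Fin d^{N−1} → ℝ (indexed by (N−1)-tuples of indices in Fin d) be nonnegative with ∑ β_{j...k}² = 1. Then, for any fixed choice of m positions among the N−1 coordinates, the sum of β_{j...l r...k} · β_{j...l r₁...k₁} over all index tuples agreeing outside those m positions and such that r ≠ r₁, ..., k ≠ k₁ in each of the m chosen positions, is at most (d−1)^m. -/
/-!
By `a b ≤ (a ^ 2 + b ^ 2) / 2` and the symmetry of the relation "differ exactly on `M`", the sum is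
at most `∑ a, deg a * β a ^ 2`, and every tuple `a` has exactly `(d - 1) ^ #M` partners: any of the
`d - 1` values other than `a i` at each `i ∈ M`, and `a i` elsewhere.
-/

open Finset

section SymmetricRelation

variable {α : Type*} [Fintype α] (R : α → α → Prop) [DecidableRel R]

theorem sum_filter_fst_eq_sum_card_mul (g : α → ℝ) :
    ∑ p ∈ univ.filter (fun p : α × α => R p.1 p.2), g p.1
      = ∑ a, (#{b | R a b} : ℝ) * g a := by
  simp only [sum_filter, Fintype.sum_prod_type]
  refine sum_congr rfl fun a _ => ?_
  rw [← sum_filter, sum_const, nsmul_eq_mul]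

theorem sum_filter_snd_eq_fst_of_symmetric (hR : ∀ a b, R a b → R b a) (g : α → ℝ) :
    ∑ p ∈ univ.filter (fun p : α × α => R p.1 p.2), g p.2
      = ∑ p ∈ univ.filter (fun p : α × α => R p.1 p.2), g p.1 :=
  sum_nbij' Prod.swap Prod.swap (by simpa using fun a b h => hR a b h)
    (by simpa using fun a b h => hR a b h) (by simp) (by simp) (by simp)

theorem sum_filter_mul_le_of_symmetric (hR : ∀ a b, R a b → R b a) {k : ℕ}
    (hk : ∀ a, #{b | R a b} ≤ k) (f : α → ℝ) :
    ∑ p ∈ univ.filter (fun p : α × α => R p.1 p.2), f p.1 * f p.2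
      ≤ k * ∑ a, f a ^ 2 := by
  calc ∑ p ∈ univ.filter (fun p : α × α => R p.1 p.2), f p.1 * f p.2
      ≤ ∑ p ∈ univ.filter (fun p : α × α => R p.1 p.2), (f p.1 ^ 2 + f p.2 ^ 2) / 2 :=
        sum_le_sum fun p _ => by nlinarith [sq_nonneg (f p.1 - f p.2)]
    _ = ∑ p ∈ univ.filter (fun p : α × α => R p.1 p.2), f p.1 ^ 2 := by
        rw [← sum_div, sum_add_distrib,
          sum_filter_snd_eq_fst_of_symmetric R hR (fun a => f a ^ 2)]
        ring
    _ = ∑ a, (#{b | R a b} : ℝ) * f a ^ 2 :=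
        sum_filter_fst_eq_sum_card_mul R (fun a => f a ^ 2)
    _ ≤ ∑ a, (k : ℝ) * f a ^ 2 :=
        sum_le_sum fun a _ => by gcongr; exact_mod_cast hk a
    _ = k * ∑ a, f a ^ 2 := (mul_sum ..).symm

end SymmetricRelation

section DiffersExactlyOn

variable {ι α : Type*}

def DiffersExactlyOn (M : Finset ι) (a b : ι → α) : Prop :=
  (∀ i ∈ M, a i ≠ b i) ∧ ∀ i ∉ M, a i = b i

instance [Fintype ι] [DecidableEq ι] [DecidableEq α] (M : Finset ι) :
    DecidableRel (DiffersExactlyOn (α := α) M) :=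
  fun _ _ => inferInstanceAs (Decidable (_ ∧ _))

theorem DiffersExactlyOn.symm {M : Finset ι} {a b : ι → α} (h : DiffersExactlyOn M a b) :
    DiffersExactlyOn M b a :=
  ⟨fun i hi => (h.1 i hi).symm, fun i hi => (h.2 i hi).symm⟩

variable [Fintype ι] [DecidableEq ι] [Fintype α] [DecidableEq α]

theorem filter_differsExactlyOn_eq_piFinset (M : Finset ι) (a : ι → α) :
    ({b | DiffersExactlyOn M a b} : Finset (ι → α))
      = Fintype.piFinset fun i => if i ∈ M then {a i}ᶜ else {a i} := by
  ext b
  rw [mem_filter, Fintype.mem_piFinset]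
  simp only [DiffersExactlyOn, mem_univ, true_and]
  refine ⟨fun ⟨hM, hMc⟩ i => ?_, fun h => ⟨fun i hi => ?_, fun i hi => ?_⟩⟩
  · by_cases hi : i ∈ M
    · simpa [hi, eq_comm] using hM i hi
    · simpa [hi, eq_comm] using hMc i hi
  · simpa [hi, eq_comm] using h i
  · simpa [hi, eq_comm] using h i

theorem card_differsExactlyOn (M : Finset ι) (a : ι → α) :
    #{b | DiffersExactlyOn M a b} = (Fintype.card α - 1) ^ #M := by
  simp only [filter_differsExactlyOn_eq_piFinset, Fintype.card_piFinset, apply_ite card,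
    card_compl, card_singleton]
  rw [prod_ite, prod_const, prod_const, one_pow, mul_one, filter_mem_eq_inter, univ_inter]

end DiffersExactlyOn

theorem stmt_1_general (N d : ℕ) (hd : 1 ≤ d)
    (β : (Fin (N - 1) → Fin d) → ℝ)
    (hsum : ∑ t, (β t) ^ 2 = 1) (M : Finset (Fin (N - 1))) :
    ∑ p ∈ Finset.univ.filter
        (fun p : ((Fin (N - 1) → Fin d) × (Fin (N - 1) → Fin d)) =>
          (∀ i ∈ M, p.1 i ≠ p.2 i) ∧ (∀ i ∉ M, p.1 i = p.2 i)),
        β p.1 * β p.2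
      ≤ ((d : ℝ) - 1) ^ M.card := by
  have hdeg (a : Fin (N - 1) → Fin d) : #{b | DiffersExactlyOn M a b} ≤ (d - 1) ^ #M := by
    rw [card_differsExactlyOn, Fintype.card_fin]
  calc _ = ∑ p ∈ univ.filter (fun p : (Fin (N - 1) → Fin d) × _ => DiffersExactlyOn M p.1 p.2),
          β p.1 * β p.2 := by
        congr 1
        ext p
        rw [mem_filter, mem_filter]
        rfl
    _ ≤ ((d - 1) ^ #M : ℕ) * ∑ t, β t ^ 2 :=
        sum_filter_mul_le_of_symmetric _ (fun _ _ h => h.symm) hdeg β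
    _ = ((d : ℝ) - 1) ^ M.card := by
        rw [hsum, mul_one]
        push_cast [Nat.cast_sub hd]
        rfl

/-- Key estimate: for nonnegative β indexed by (N−1)-tuples with ∑β² = 1,
the sum of β_a β_b over pairs of tuples differing in each coordinate of a set M
of m positions and agreeing elsewhere is at most (d−1)^m. -/
theorem stmt_1 (N d : ℕ) (hN : 1 ≤ N) (hd : 1 ≤ d)
    (β : (Fin (N - 1) → Fin d) → ℝ) (hβ : ∀ t, 0 ≤ β t)
    (hsum : ∑ t, (β t) ^ 2 = 1) (M : Finset (Fin (N - 1))) :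
    ∑ p ∈ Finset.univ.filter
        (fun p : ((Fin (N - 1) → Fin d) × (Fin (N - 1) → Fin d)) =>
          (∀ i ∈ M, p.1 i ≠ p.2 i) ∧ (∀ i ∉ M, p.1 i = p.2 i)),
        β p.1 * β p.2
      ≤ ((d : ℝ) - 1) ^ M.card :=
  stmt_1_general N d hd β hsum M
end

section
/- For orthonormal vectors e_j, e_{j₁} in a Hilbert space H with j ≠ j₁ and any integer S ≥ 1, the operator W on H^{⊗S} defined by 2W = 2^{−S}[(|e_j+e_{j₁}⟩⟨e_j+e_{j₁}|)^{⊗S} − (|e_j−e_{j₁}⟩⟨e_j−e_{j₁}|)^{⊗S} + i(|e_j+ie_{j₁}⟩⟨e_j+ie_{j₁}|)^{⊗S} − i(|e_j−ie_{j₁}⟩⟨e_j−ie_{j₁}|)^{⊗S}] satisfies tr_{H^{⊗(S−1)}}[W] = |e_j⟩⟨e_{j₁}|, where the partial trace is over the last S−1 tensor factors. -/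
open Matrix

/-- The S-fold tensor power ψ^{⊗S} (S = k+1) of a vector ψ ∈ ℂ^d, as a vector
on the index set (Fin d) × (Fin k → Fin d) of H ⊗ H^{⊗k}. -/
def tpow (d k : ℕ) (ψ : Fin d → ℂ) : (Fin d × (Fin k → Fin d)) → ℂ :=
  fun p => ψ p.1 * ∏ i, ψ (p.2 i)

/-- The rank-one tensor power (|ψ⟩⟨ψ|)^{⊗S} = |ψ^{⊗S}⟩⟨ψ^{⊗S}| on H^{⊗(k+1)}. -/
def opow (d k : ℕ) (ψ : Fin d → ℂ) :
    Matrix (Fin d × (Fin k → Fin d)) (Fin d × (Fin k → Fin d)) ℂ :=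
  Matrix.vecMulVec (tpow d k ψ) (star (tpow d k ψ))

/-- Partial trace over the last k tensor factors of H^{⊗(k+1)}. -/
noncomputable def ptr (d k : ℕ)
    (M : Matrix (Fin d × (Fin k → Fin d)) (Fin d × (Fin k → Fin d)) ℂ) :
    Matrix (Fin d) (Fin d) ℂ :=
  Matrix.of fun a b => ∑ g : Fin k → Fin d, M (a, g) (b, g)

lemma ptr_opow (d k : ℕ) (ψ : Fin d → ℂ) :
    ptr d k (opow d k ψ) = (star ψ ⬝ᵥ ψ) ^ k • Matrix.vecMulVec ψ (star ψ) := by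
  ext a b
  simp only [ptr, opow, tpow, Matrix.vecMulVec_apply, Matrix.of_apply, Matrix.smul_apply,
    Pi.star_apply, smul_eq_mul, star_mul', star_prod]
  have h1 : ∀ g : Fin k → Fin d,
      (ψ a * ∏ i, ψ (g i)) * (star (ψ b) * ∏ i, star (ψ (g i)))
        = (ψ a * star (ψ b)) * ∏ i, (star (ψ (g i)) * ψ (g i)) := by
    intro g
    rw [Finset.prod_mul_distrib]
    ring
  rw [Finset.sum_congr rfl fun g _ => h1 g, ← Finset.mul_sum]
  have h2 : (∑ g : Fin k → Fin d, ∏ i, (star (ψ (g i)) * ψ (g i)))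
      = (star ψ ⬝ᵥ ψ) ^ k :=
    calc ∑ g : Fin k → Fin d, ∏ i, (star (ψ (g i)) * ψ (g i))
        = ∏ _i : Fin k, ∑ x, star (ψ x) * ψ x := by
          rw [Finset.prod_univ_sum]; simp [Fintype.piFinset_univ]
      _ = (star ψ ⬝ᵥ ψ) ^ k := by simp [dotProduct, Finset.prod_const]
  rw [h2]; ring

lemma ptr_smul (d k : ℕ) (c : ℂ) (M : Matrix (Fin d × (Fin k → Fin d)) (Fin d × (Fin k → Fin d)) ℂ) :
    ptr d k (c • M) = c • ptr d k M := by
  ext a b; simp [ptr, Finset.mul_sum]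

lemma ptr_add (d k : ℕ) (M N : Matrix (Fin d × (Fin k → Fin d)) (Fin d × (Fin k → Fin d)) ℂ) :
    ptr d k (M + N) = ptr d k M + ptr d k N := by
  ext a b; simp [ptr, Finset.sum_add_distrib]

lemma ptr_sub (d k : ℕ) (M N : Matrix (Fin d × (Fin k → Fin d)) (Fin d × (Fin k → Fin d)) ℂ) :
    ptr d k (M - N) = ptr d k M - ptr d k N := by
  ext a b; simp [ptr, Finset.sum_sub_distrib]


/-- Dilation property: for orthonormal u = e_j, v = e_{j₁} (j ≠ j₁) and S = k+1 ≥ 1,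
the operator W with 2W = 2^{−S}[(|u+v⟩⟨u+v|)^{⊗S} − (|u−v⟩⟨u−v|)^{⊗S}
+ i(|u+iv⟩⟨u+iv|)^{⊗S} − i(|u−iv⟩⟨u−iv|)^{⊗S}] satisfies
tr_{H^{⊗(S−1)}}[W] = |u⟩⟨v|. -/
theorem stmt_7 (d k : ℕ) (u v : Fin d → ℂ)
    (huu : star u ⬝ᵥ u = 1) (hvv : star v ⬝ᵥ v = 1) (huv : star u ⬝ᵥ v = 0)
    (W : Matrix (Fin d × (Fin k → Fin d)) (Fin d × (Fin k → Fin d)) ℂ)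
    (hW : (2 : ℂ) • W = ((2 : ℂ) ^ (k + 1))⁻¹ •
        (opow d k (u + v) - opow d k (u - v)
          + Complex.I • opow d k (u + Complex.I • v)
          - Complex.I • opow d k (u - Complex.I • v))) :
    ptr d k W = Matrix.vecMulVec u (star v) := by
  have hvu : star v ⬝ᵥ u = 0 := by
    rw [Matrix.star_dotProduct, huv, star_zero]
  have n1 : star (u + v) ⬝ᵥ (u + v) = 2 := by
    simp [add_dotProduct, dotProduct_add, huu, hvv, huv, hvu]
    ring
  have n2 : star (u - v) ⬝ᵥ (u - v) = 2 := by
    simp [sub_dotProduct, dotProduct_sub, huu, hvv, huv, hvu]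
    ring
  have n3 : star (u + Complex.I • v) ⬝ᵥ (u + Complex.I • v) = 2 := by
    simp [add_dotProduct, dotProduct_add, smul_dotProduct,
      dotProduct_smul, huu, hvv, huv, hvu, star_smul, Complex.star_def,
      Complex.conj_I, smul_eq_mul]
    ring_nf
  have n4 : star (u - Complex.I • v) ⬝ᵥ (u - Complex.I • v) = 2 := by
    simp [sub_dotProduct, dotProduct_sub, smul_dotProduct,
      dotProduct_smul, huu, hvv, huv, hvu, star_smul, Complex.star_def,
      Complex.conj_I, smul_eq_mul]
    ring_nf
  have hcomb :
      Matrix.vecMulVec (u + v) (star (u + v)) - Matrix.vecMulVec (u - v) (star (u - v))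
        + Complex.I • Matrix.vecMulVec (u + Complex.I • v) (star (u + Complex.I • v))
        - Complex.I • Matrix.vecMulVec (u - Complex.I • v) (star (u - Complex.I • v))
      = (4 : ℂ) • Matrix.vecMulVec u (star v) := by
    ext a b
    simp [Matrix.vecMulVec_apply, star_smul, Complex.star_def, Complex.conj_I, smul_eq_mul]
    ring_nf
    simp [Complex.I_sq]
    ring
  have key : (2 : ℂ) • ptr d k W = (2 : ℂ) • Matrix.vecMulVec u (star v) := by
    rw [← ptr_smul, hW, ptr_smul, ptr_sub, ptr_add, ptr_sub, ptr_smul, ptr_smul,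
      ptr_opow, ptr_opow, ptr_opow, ptr_opow, n1, n2, n3, n4]
    rw [smul_comm Complex.I, smul_comm Complex.I, ← smul_sub, ← smul_add, ← smul_sub,
      hcomb, smul_smul, smul_smul]
    congr 1
    rw [pow_succ]
    field_simp
    ring
  exact smul_right_injective _ (two_ne_zero) key
end
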